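/- Let (W,S) be a finite Coxeter system. If every proper parabolic subgroup W_J (J ⊊ S) has an independent signature sequence with a lower triangular independent signature matrix (with respect to some ordering of the conjugacy classes of W_J), then W has a non-cuspidal signature sequence with a lower triangular non-cuspidal signature matrix (with respect to some ordering of the non-cuspidal conjugacy classes of W). -/

import Mathlib

/-- Words over the alphabet `ι` with prescribed signature `α`: the word `w` has signature `α`
if each letter `i` occurs exactly `α i` times in `w`. -/
def sigSet {ι : Type*} [DecidableEq ι] (α : ι → ℕ) : Set (List ι) :=
  {w | ∀ i, w.count i = α i}

/-- The signature vector `V_α` of a signature `α`, with respect to a family of group elements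
`s : ι → G` and an enumeration `C : Fin r → ConjClasses G` of (some) conjugacy classes: its
`j`-th entry is the number of words of signature `α` whose product lies in the class `C j`. -/
noncomputable def sigVec {ι G : Type*} [DecidableEq ι] [Group G] (s : ι → G) {r : ℕ}
    (C : Fin r → ConjClasses G) (α : ι → ℕ) : Fin r → ℚ :=
  fun j => ((sigSet α ∩ {w | (w.map s).prod ∈ (C j).carrier}).ncard : ℚ)

/-- The group `G`, with generating family `s : ι → G`, has an *independent signature sequence*:
there are an enumeration `C₁, …, C_r` of all conjugacy classes of `G` and signatures
`α₁, …, α_r` whose signature vectors `V_{α₁}, …, V_{α_r}` are linearly independent. -/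
def HasISS {ι G : Type*} [DecidableEq ι] [Group G] (s : ι → G) : Prop :=
  ∃ (r : ℕ) (C : Fin r → ConjClasses G) (α : Fin r → ι → ℕ),
    Function.Bijective C ∧ LinearIndependent ℚ (fun i => sigVec s C (α i))

/-- The group `G`, with generating family `s : ι → G`, has an independent signature sequence
whose independent signature matrix is lower triangular with respect to some ordering of the
conjugacy classes of `G`. -/
def HasISSLT {ι G : Type*} [DecidableEq ι] [Group G] (s : ι → G) : Prop :=
  ∃ (r : ℕ) (C : Fin r → ConjClasses G) (α : Fin r → ι → ℕ),
    Function.Bijective C ∧ LinearIndependent ℚ (fun i => sigVec s C (α i)) ∧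
    ∀ i j : Fin r, i < j → sigVec s C (α i) j = 0

/-- A conjugacy class `c` of a Coxeter group `W` with Coxeter system `cs` is *cuspidal* if it
does not meet any proper (standard) parabolic subgroup `W_J`, `J ⊊ S`. -/
def IsCuspidal {B W : Type*} [Group W] {M : CoxeterMatrix B}
    (cs : CoxeterSystem M W) (c : ConjClasses W) : Prop :=
  ∀ J : Set B, J ≠ Set.univ → ∀ g ∈ c.carrier, g ∉ Subgroup.closure (cs.simple '' J)

/-- The Coxeter group `W` has a *non-cuspidal signature sequence*: an enumeration
`Ncus₁, …, Ncus_p` of its non-cuspidal conjugacy classes and signatures `α₁, …, α_p` whose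
non-cuspidal signature vectors `NV(α₁), …, NV(α_p)` are linearly independent, and such that no
word of signature `αᵢ` has its product in a cuspidal class. -/
def HasNSS {B W : Type*} [DecidableEq B] [Group W] {M : CoxeterMatrix B}
    (cs : CoxeterSystem M W) : Prop :=
  ∃ (p : ℕ) (N : Fin p → ConjClasses W) (α : Fin p → B → ℕ),
    Function.Injective N ∧ (∀ i, ¬ IsCuspidal cs (N i)) ∧
    (∀ c : ConjClasses W, ¬ IsCuspidal cs c → ∃ i, N i = c) ∧
    LinearIndependent ℚ (fun i => sigVec cs.simple N (α i)) ∧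
    (∀ (i : Fin p) (c : ConjClasses W), IsCuspidal cs c →
      ∀ w : List B, w ∈ sigSet (α i) → (w.map cs.simple).prod ∉ c.carrier)

/-- As `HasNSS`, with moreover a lower triangular non-cuspidal signature matrix. -/
def HasNSSLT {B W : Type*} [DecidableEq B] [Group W] {M : CoxeterMatrix B}
    (cs : CoxeterSystem M W) : Prop :=
  ∃ (p : ℕ) (N : Fin p → ConjClasses W) (α : Fin p → B → ℕ),
    Function.Injective N ∧ (∀ i, ¬ IsCuspidal cs (N i)) ∧
    (∀ c : ConjClasses W, ¬ IsCuspidal cs c → ∃ i, N i = c) ∧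
    LinearIndependent ℚ (fun i => sigVec cs.simple N (α i)) ∧
    (∀ i j : Fin p, i < j → sigVec cs.simple N (α i) j = 0) ∧
    (∀ (i : Fin p) (c : ConjClasses W), IsCuspidal cs c →
      ∀ w : List B, w ∈ sigSet (α i) → (w.map cs.simple).prod ∉ c.carrier)

/-- The Coxeter group `W` has a *cuspidal signature sequence*: an enumeration
`Cus₁, …, Cus_q` of its cuspidal conjugacy classes and signatures `β₁, …, β_q` whose cuspidal
signature vectors `CV(β₁), …, CV(β_q)` are linearly independent. -/
def HasCSS {B W : Type*} [DecidableEq B] [Group W] {M : CoxeterMatrix B}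
    (cs : CoxeterSystem M W) : Prop :=
  ∃ (q : ℕ) (Cu : Fin q → ConjClasses W) (β : Fin q → B → ℕ),
    Function.Injective Cu ∧ (∀ j, IsCuspidal cs (Cu j)) ∧
    (∀ c : ConjClasses W, IsCuspidal cs c → ∃ j, Cu j = c) ∧
    LinearIndependent ℚ (fun j => sigVec cs.simple Cu (β j))

/-- As `HasCSS`, with moreover a lower triangular cuspidal signature matrix. -/
def HasCSSLT {B W : Type*} [DecidableEq B] [Group W] {M : CoxeterMatrix B}
    (cs : CoxeterSystem M W) : Prop :=
  ∃ (q : ℕ) (Cu : Fin q → ConjClasses W) (β : Fin q → B → ℕ),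
    Function.Injective Cu ∧ (∀ j, IsCuspidal cs (Cu j)) ∧
    (∀ c : ConjClasses W, IsCuspidal cs c → ∃ j, Cu j = c) ∧
    LinearIndependent ℚ (fun j => sigVec cs.simple Cu (β j)) ∧
    ∀ i j : Fin q, i < j → sigVec cs.simple Cu (β i) j = 0

/-- The canonical generating family of the standard parabolic subgroup `W_J`, indexed by `J`. -/
def parabolicGen {B W : Type*} [Group W] {M : CoxeterMatrix B} (cs : CoxeterSystem M W)
    (J : Finset B) : J → Subgroup.closure (cs.simple '' (J : Set B)) :=
  fun j => ⟨cs.simple j, Subgroup.subset_closure ⟨j.1, Finset.mem_coe.mpr j.2, rfl⟩⟩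

/-!
Every non-cuspidal class of `W` is the fusion of a class of some proper parabolic subgroup `W_J`.
For such a class pick a preimage, the `t`-th class of `W_J`, with `t` as small as possible; take
as its signature the `t`-th signature of `W_J` extended by zero to `S`, and list the non-cuspidal
classes by increasing `t`. Words of the extended signature are words in `J`, so their products lie
in `W_J` (hence in no cuspidal class) and the count in a class `d` of `W` is the sum of the
`t`-th row of the matrix of `W_J` over the classes fusing into `d`. For a later class `d` this sum
vanishes: entries beyond `t` vanish by triangularity in `W_J`, the `t`-th class fuses into the
class itself, and a class before `t` fusing into `d` would contradict the minimal choice for `d`.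
On the diagonal the nonnegative sum contains the nonzero diagonal entry of `W_J`.
-/

open Function

theorem linearIndependent_iff_diag_ne_zero_of_lowerTriangular {K n : Type*} [Field K] [Fintype n]
    [LinearOrder n] {v : n → n → K} (hv : ∀ i j, i < j → v i j = 0) :
    LinearIndependent K v ↔ ∀ i, v i i ≠ 0 := by
  have hM : (Matrix.of v).IsLowerTriangular := fun i j hij => hv i j hij
  rw [show v = (Matrix.of v).row from rfl, Matrix.linearIndependent_rows_iff_isUnit,
    Matrix.isUnit_iff_isUnit_det, Matrix.det_of_isLowerTriangular _ hM, isUnit_iff_ne_zero,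
    Finset.prod_ne_zero_iff]
  simp

theorem Fintype.exists_equiv_fin_monotone {α β : Type*} [Fintype α] [LinearOrder β]
    (f : α → β) : ∃ e : Fin (Fintype.card α) ≃ α, Monotone (f ∘ e) := by
  let key : α → β ×ₗ Fin (Fintype.card α) := fun a => toLex (f a, Fintype.equivFin α a)
  have hkey : Injective key := fun a b h => (Fintype.equivFin α).injective (congrArg (·.2) h)
  let _ : LinearOrder α := LinearOrder.lift' key hkey
  let e := Fintype.orderIsoFinOfCardEq α rfl
  exact ⟨e.toEquiv, fun i j hij => Prod.Lex.monotone_fst _ _ (e.monotone hij)⟩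

section FiberSum

variable {κ X R : Type*} [Fintype κ] [DecidableEq X] [AddCommMonoid R]

def fiberSum (f : κ → X) (u : κ → R) (x : X) : R :=
  ∑ t with f t = x, u t

theorem fiberSum_eq_zero [LinearOrder κ] {f : κ → X} {u : κ → R} {x : X} {t₀ : κ}
    (hu : ∀ t, t₀ < t → u t = 0) (hx : f t₀ ≠ x) (hmin : ∀ t, f t = x → t₀ ≤ t) :
    fiberSum f u x = 0 :=
  Finset.sum_eq_zero fun t ht => by
    have hft : f t = x := (Finset.mem_filter.mp ht).2
    exact hu t ((hmin t hft).lt_of_ne fun h => hx (h ▸ hft))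

theorem fiberSum_pos [PartialOrder R] [IsOrderedCancelAddMonoid R] {f : κ → X} {u : κ → R}
    (hu : 0 ≤ u) {t₀ : κ} (ht₀ : 0 < u t₀) : 0 < fiberSum f u (f t₀) :=
  Finset.sum_pos' (fun t _ => hu t) ⟨t₀, by simp, ht₀⟩

end FiberSum

theorem Set.Finite.ncard_inter_preimage_eq_sum {X κ : Type*} {U : Set X}
    (hU : U.Finite) (g : X → κ) (T : Finset κ) :
    (U ∩ g ⁻¹' T).ncard = ∑ t ∈ T, (U ∩ g ⁻¹' {t}).ncard := by
  have hU' : U ∩ g ⁻¹' T = ⋃ t ∈ (T : Set κ), U ∩ g ⁻¹' {t} := by ext; simp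
  rw [hU', T.finite_toSet.ncard_biUnion (fun _ _ => hU.inter_of_left _), finsum_mem_coe_finset]
  intro a _ b _ hab
  exact ((Set.disjoint_singleton.mpr hab).preimage g).inter_left' U |>.inter_right' U

theorem sigSet_finite {ι : Type*} [DecidableEq ι] (α : ι → ℕ) : (sigSet α).Finite := by
  rcases (sigSet α).eq_empty_or_nonempty with h | ⟨w₀, hw₀⟩
  · simp [h]
  · refine w₀.permutations.finite_toSet.subset fun w hw => ?_
    exact List.mem_permutations.mpr (List.perm_iff_count.mpr fun i => (hw i).trans (hw₀ i).symm)

section Words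

variable {B : Type*} [DecidableEq B] {p : B → Prop}

theorem sigSet_extend_val (β : Subtype p → ℕ) :
    sigSet (extend Subtype.val β 0) = List.map Subtype.val '' sigSet β := by
  have hext : ∀ b, ¬ p b → extend Subtype.val β 0 b = 0 := fun b hb =>
    extend_apply' _ _ _ fun ⟨a, ha⟩ => hb (ha ▸ a.2)
  -- `sigSet` counts with `instBEqOfDecidableEq`, whereas instance search on `Subtype p` finds
  -- `Subtype.instBEq`; the two are reconciled by `lawful_beq_subsingleton` or named explicitly.
  ext w
  constructor
  · intro hw
    have hwp : ∀ b ∈ w, p b := fun b hb => by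
      by_contra hpb
      exact List.count_eq_zero.mp ((hw b).trans (hext b hpb)) hb
    refine ⟨w.attachWith p hwp, fun j => ?_, List.attachWith_map_subtype_val hwp⟩
    rw [← Subtype.val_injective.extend_apply β 0 j, ← hw j.1, ← List.count_attachWith hwp]
    congr
    exact lawful_beq_subsingleton _ _
  · rintro ⟨u, hu, rfl⟩ b
    by_cases hb : p b
    · rw [show b = (⟨b, hb⟩ : Subtype p).1 from rfl, Subtype.val_injective.extend_apply,
        ← hu]
      exact @List.count_map_of_injective _ _ instBEqOfDecidableEq _ _ _ _ _
        Subtype.val_injective _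
    · rw [hext b hb, List.count_eq_zero]
      rintro hbu
      obtain ⟨a, -, rfl⟩ := List.mem_map.mp hbu
      exact hb a.2

theorem ncard_sigSet_extend_eq_fiberSum {G : Type*} [Group G] [DecidableEq (ConjClasses G)]
    {H : Subgroup G} (f : B → G) (s : Subtype p → H) (hs : ∀ j, (s j : G) = f j) {r : ℕ}
    {C : Fin r → ConjClasses H} (hC : Bijective C) (β : Subtype p → ℕ) (c : ConjClasses G) :
    ((sigSet (extend Subtype.val β 0) ∩ {w | (w.map f).prod ∈ c.carrier}).ncard : ℚ) =
      fiberSum (fun t => (C t).map H.subtype) (sigVec s C β) c := by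
  have hprod (u : List (Subtype p)) :
      ((u.map Subtype.val).map f).prod = H.subtype (u.map s).prod := by
    rw [map_list_prod, List.map_map, List.map_map]
    exact congrArg List.prod (List.map_congr_left fun j _ => (hs j).symm)
  let e := Equiv.ofBijective C hC
  let g : List (Subtype p) → Fin r := fun u => e.symm (ConjClasses.mk (u.map s).prod)
  have hg : ∀ u t, g u = t ↔ (u.map s).prod ∈ (C t).carrier := fun u t => by
    rw [ConjClasses.mem_carrier_iff_mk_eq, Equiv.symm_apply_eq]
    exact Iff.rfl
  have hfus : List.map Subtype.val ⁻¹' {w | (w.map f).prod ∈ c.carrier} =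
      g ⁻¹' ↑(Finset.univ.filter fun t => (C t).map H.subtype = c) := by
    ext u
    simp only [Set.mem_preimage, Set.mem_ofPred_eq, hprod, ConjClasses.mem_carrier_iff_mk_eq,
      Finset.coe_filter, Finset.mem_univ, true_and, g, e, Equiv.ofBijective_apply_symm_apply]
    rfl
  rw [sigSet_extend_val, ← Set.image_inter_preimage, Set.ncard_image_of_injective _
    (List.map_injective_iff.mpr Subtype.val_injective), hfus,
    (sigSet_finite β).ncard_inter_preimage_eq_sum, Nat.cast_sum]
  refine Finset.sum_congr rfl fun t _ => ?_
  simp only [sigVec, Set.preimage, Set.mem_singleton_iff, hg]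

theorem prod_mem_closure_of_mem_sigSet_extend {G : Type*} [Group G] (f : B → G)
    {β : Subtype p → ℕ} {w : List B} (hw : w ∈ sigSet (extend Subtype.val β 0)) :
    (w.map f).prod ∈ Subgroup.closure (f '' {b | p b}) := by
  rw [sigSet_extend_val] at hw
  obtain ⟨u, -, rfl⟩ := hw
  refine list_prod_mem fun x hx => Subgroup.subset_closure ?_
  obtain ⟨b, hb, rfl⟩ := List.mem_map.mp hx
  obtain ⟨j, -, rfl⟩ := List.mem_map.mp hb
  exact ⟨j, j.2, rfl⟩

end Words

theorem exists_enum_fiberSum_lowerTriangular {ι X R : Type*} [DecidableEq X] [AddCommMonoid R]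
    [PartialOrder R] [IsOrderedCancelAddMonoid R] {r : ι → ℕ} (fus : ∀ J, Fin (r J) → X)
    (v : ∀ J, Fin (r J) → Fin (r J) → R) (hv0 : ∀ J t, 0 ≤ v J t)
    (hvlt : ∀ J t t', t < t' → v J t t' = 0) (hvd : ∀ J t, 0 < v J t t)
    (S : Set X) [Finite S] (hS : ∀ x ∈ S, ∃ J t, fus J t = x) :
    ∃ (p : ℕ) (N : Fin p → X) (P : Fin p → Σ J, Fin (r J)),
      Injective N ∧ Set.range N = S ∧
      (∀ i j, i < j → fiberSum (fus (P i).1) (v (P i).1 (P i).2) (N j) = 0) ∧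
      ∀ i, 0 < fiberSum (fus (P i).1) (v (P i).1 (P i).2) (N i) := by
  classical
  have hmin : ∀ x : S, ∃ q : Σ J, Fin (r J), fus q.1 q.2 = x ∧
      ∀ J t, fus J t = x → (q.2 : ℕ) ≤ t := by
    rintro ⟨x, hx⟩
    obtain ⟨J, t, h⟩ := hS x hx
    have hex : ∃ n, ∃ q : Σ J, Fin (r J), fus q.1 q.2 = x ∧ (q.2 : ℕ) = n :=
      ⟨t, ⟨J, t⟩, h, rfl⟩
    obtain ⟨q, hq, hqn⟩ := Nat.find_spec hex
    exact ⟨q, hq, fun J t ht => hqn ▸ Nat.find_min' hex ⟨⟨J, t⟩, ht, rfl⟩⟩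
  choose P hPfus hPmin using hmin
  have := Fintype.ofFinite S
  obtain ⟨e, he⟩ := Fintype.exists_equiv_fin_monotone fun x : S => ((P x).2 : ℕ)
  refine ⟨_, fun i => e i, fun i => P (e i), Subtype.val_injective.comp e.injective, ?_,
    fun i j hij => fiberSum_eq_zero (hvlt _ _) ?_ fun t ht => ?_,
    fun i => ?_⟩
  · rw [show (fun i => (e i : X)) = Subtype.val ∘ e from rfl, EquivLike.range_comp,
      Subtype.range_coe]
  · rw [hPfus]
    exact fun h => hij.ne (e.injective (Subtype.ext h))
  · exact Fin.le_iff_val_le_val.mpr ((he hij.le).trans (hPmin _ _ t ht))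
  · dsimp only
    rw [← hPfus (e i)]
    exact fiberSum_pos (hv0 _ _) (hvd _ _)

theorem exists_parabolic_conjClasses_map_eq_of_not_isCuspidal {B W : Type*} [Fintype B]
    [Group W] {M : CoxeterMatrix B} {cs : CoxeterSystem M W} {c : ConjClasses W}
    (hc : ¬ IsCuspidal cs c) :
    ∃ J : Finset B, J ≠ Finset.univ ∧ ∃ d : ConjClasses (Subgroup.closure (cs.simple '' J)),
      d.map (Subgroup.closure (cs.simple '' J)).subtype = c := by
  simp only [IsCuspidal, not_forall, not_not] at hc
  obtain ⟨J, hJ, g, hg, hgJ⟩ := hc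
  have hJ' := (Set.toFinite J).coe_toFinset
  refine ⟨(Set.toFinite J).toFinset, fun h => hJ (by simpa [h] using hJ'.symm), ?_⟩
  rw [hJ']
  exact ⟨ConjClasses.mk ⟨g, hgJ⟩, ConjClasses.mem_carrier_iff_mk_eq.mp hg⟩

/-- Let `(W,S)` be a finite Coxeter system.  If every proper standard parabolic subgroup
`W_J` (`J ⊊ S`) has an independent signature sequence with a lower triangular independent
signature matrix, then `W` has a non-cuspidal signature sequence with a lower triangular
non-cuspidal signature matrix. -/
theorem hasNSSLT_of_parabolic_hasISSLT {B W : Type} [DecidableEq B] [Fintype B]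
    [Group W] [Finite W] {M : CoxeterMatrix B} (cs : CoxeterSystem M W)
    (h : ∀ J : Finset B, J ≠ Finset.univ → HasISSLT (parabolicGen cs J)) :
    HasNSSLT cs := by
  classical
  choose r C α hC hli hlt using fun J : {J : Finset B // J ≠ Finset.univ} => h J.1 J.2
  have hdiag J := (linearIndependent_iff_diag_ne_zero_of_lowerTriangular (hlt J)).mp (hli J)
  obtain ⟨p, N, P, hN, hNS, hM0, hMd⟩ := exists_enum_fiberSum_lowerTriangular
    (fun J t => (C J t).map (Subgroup.closure (cs.simple '' (J.1 : Set B))).subtype)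
    (fun J t => sigVec (parabolicGen cs J) (C J) (α J t)) (fun _ _ _ => Nat.cast_nonneg _) hlt
    (fun J t => (Nat.cast_nonneg _).lt_of_ne (hdiag J t).symm) {c | ¬ IsCuspidal cs c}
    fun c hc => by
      obtain ⟨J, hJ, d, hd⟩ := exists_parabolic_conjClasses_map_eq_of_not_isCuspidal hc
      obtain ⟨t, rfl⟩ := (hC ⟨J, hJ⟩).2 d
      exact ⟨⟨J, hJ⟩, t, hd⟩
  let A i : B → ℕ := extend Subtype.val (α (P i).1 (P i).2) 0
  have hA i j : sigVec cs.simple N (A i) j = _ :=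
    ncard_sigSet_extend_eq_fiberSum cs.simple (parabolicGen cs _) (fun _ => rfl) (hC _) _ (N j)
  have hLT i j (hij : i < j) : sigVec cs.simple N (A i) j = 0 := (hA i j).trans (hM0 i j hij)
  refine ⟨p, N, A, hN, fun i => hNS.subset ⟨i, rfl⟩, fun c hc => hNS.symm.subset hc,
    (linearIndependent_iff_diag_ne_zero_of_lowerTriangular hLT).mpr fun i =>
      (hA i i).trans_ne (hMd i).ne', hLT, fun i c hc w hw hwc => ?_⟩
  exact hc _ (Finset.coe_eq_univ.not.mpr (P i).1.2) _ hwc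
      (prod_mem_closure_of_mem_sigSet_extend cs.simple hw)
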